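/- Let 0 < q < 1 and 0 < w < 1 be reals, r ≥ 1 an integer, x ≥ 0 real, n ≥ 0 an integer, and let d be an odd positive integer. Define E^{(r-1,r)}_{n,w,q}(x) = 2^r Σ_{m=0}^∞ qbinom(m+r-1, m; q)(-1)^m w^m [m+x]_q^n. Then E^{(r-1,r)}_{n,w,q}(x) = [d]_q^n Σ_{a_1,...,a_r=0}^{d-1} q^{Σ_{i=1}^r (r-i) a_i} (-1)^{a_1+⋯+a_r} w^{a_1+⋯+a_r} E^{(r-1,r)}_{n,w^d,q^d}((a_1+⋯+a_r+x)/d). -/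

import Mathlib

/-- Gaussian (q-)binomial coefficient over ℝ. -/
noncomputable def qbinomR (a b : ℕ) (q : ℝ) : ℝ :=
  ∏ i ∈ Finset.range b, (1 - q ^ (a - b + i + 1)) / (1 - q ^ (i + 1))

/-- The `(r-1, q)`-extension of the `w`-Euler polynomial of order `r`. -/
noncomputable def hqwEuler (r n : ℕ) (w q x : ℝ) : ℝ :=
  2 ^ r * ∑' m : ℕ, qbinomR (m + r - 1) m q * (-1) ^ m * w ^ m *
    ((1 - q ^ ((m : ℝ) + x)) / (1 - q)) ^ n

namespace HqwAux

open Finset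

/-- Product form of the relevant Gaussian binomial. -/
noncomputable def P (r m : ℕ) (q : ℝ) : ℝ :=
  ∏ i ∈ Finset.range m, (1 - q ^ (r + i)) / (1 - q ^ (i + 1))

lemma qbinomR_eq_P (r m : ℕ) (hr : 1 ≤ r) (q : ℝ) : qbinomR (m + r - 1) m q = P r m q := by
  unfold qbinomR P
  refine Finset.prod_congr rfl fun i _ => ?_
  congr 3
  omega

variable {q w x : ℝ} {r n : ℕ}

lemma one_sub_pow_pos (hq0 : 0 < q) (hq1 : q < 1) (k : ℕ) (hk : 1 ≤ k) : 0 < 1 - q ^ k := by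
  have : q ^ k < 1 := pow_lt_one₀ hq0.le hq1 (by omega)
  linarith

lemma P_pascal (hq0 : 0 < q) (hq1 : q < 1) (r m : ℕ) :
    P (r+1) (m+1) q = P r (m+1) q + q ^ r * P (r+1) m q := by
  have hne : ∀ k : ℕ, (1 : ℝ) - q ^ (k+1) ≠ 0 := fun k =>
    (one_sub_pow_pos hq0 hq1 _ (by omega)).ne'
  have hDm : ∀ l : ℕ, (∏ i ∈ range l, ((1:ℝ) - q ^ (i+1))) ≠ 0 := fun l =>
    Finset.prod_ne_zero_iff.2 fun i _ => hne i
  unfold P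
  rw [Finset.prod_div_distrib, Finset.prod_div_distrib, Finset.prod_div_distrib]
  rw [Finset.prod_range_succ (fun i => (1:ℝ) - q ^ (r+1+i)) m]
  rw [Finset.prod_range_succ' (fun i => (1:ℝ) - q ^ (r+i)) m]
  have h1 : (∏ i ∈ range m, ((1:ℝ) - q ^ (r + (i+1)))) = ∏ i ∈ range m, ((1:ℝ) - q ^ (r+1+i)) := by
    refine Finset.prod_congr rfl fun i _ => ?_
    congr 2
    omega
  rw [h1]
  rw [Finset.prod_range_succ (fun i => (1:ℝ) - q ^ (i+1)) m]
  have h2 := hDm m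
  have h3 := hne m
  field_simp
  ring


lemma P_conv (hq0 : 0 < q) (hq1 : q < 1) (r : ℕ) : ∀ m : ℕ,
    ∑ p ∈ Finset.HasAntidiagonal.antidiagonal m, q ^ (r * p.1) * P r p.2 q = P (r+1) m q := by
  intro m
  induction m with
  | zero => simp [P]
  | succ m ih =>
    rw [Finset.Nat.sum_antidiagonal_succ]
    have h1 : ∀ p : ℕ × ℕ, q ^ (r * (p.1 + 1)) * P r p.2 q = q ^ r * (q ^ (r * p.1) * P r p.2 q) := by
      intro p; rw [Nat.mul_add, mul_one, pow_add]; ring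
    simp only [h1]
    rw [← Finset.mul_sum, ih, P_pascal hq0 hq1, Nat.mul_zero, pow_zero, one_mul]

lemma sum_aT_succ {M : Type*} [AddCommMonoid M] (k m : ℕ) (g : (Fin (k+1) → ℕ) → M) :
    ∑ f ∈ Finset.Nat.antidiagonalTuple (k+1) m, g f
      = ∑ p ∈ Finset.HasAntidiagonal.antidiagonal m,
          ∑ f ∈ Finset.Nat.antidiagonalTuple k p.2, g (Fin.cons p.1 f) := by
  rw [Finset.sum_sigma']
  refine (Finset.sum_nbij' (i := fun p : Σ _ : ℕ × ℕ, Fin k → ℕ => Fin.cons p.1.1 p.2)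
    (j := fun f => ⟨(f 0, ∑ i, Fin.tail f i), Fin.tail f⟩) ?_ ?_ ?_ ?_ ?_).symm
  · rintro ⟨⟨a, b⟩, f⟩ hp
    simp only [Finset.mem_sigma, Finset.HasAntidiagonal.mem_antidiagonal,
      Finset.Nat.mem_antidiagonalTuple] at hp ⊢
    rw [Fin.sum_univ_succ]
    simp only [Fin.cons_zero, Fin.cons_succ]
    rw [hp.2, hp.1]
  · intro f hf
    simp only [Finset.Nat.mem_antidiagonalTuple, Finset.mem_sigma,
      Finset.HasAntidiagonal.mem_antidiagonal] at hf ⊢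
    refine ⟨?_, trivial⟩
    rw [← hf, Fin.sum_univ_succ]
    rfl
  · rintro ⟨⟨a, b⟩, f⟩ hp
    simp only [Finset.mem_sigma, Finset.HasAntidiagonal.mem_antidiagonal,
      Finset.Nat.mem_antidiagonalTuple] at hp
    have hb : ∑ x, f x = b := hp.2
    simp only [Fin.cons_zero, Fin.tail_cons, hb]
  · intro f hf
    exact Fin.cons_self_tail f
  · rintro ⟨⟨a, b⟩, f⟩ _
    rfl

lemma sum_aT_pow (hq0 : 0 < q) (hq1 : q < 1) :
    ∀ r, 1 ≤ r → ∀ m, ∑ f ∈ Finset.Nat.antidiagonalTuple r m,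
      q ^ (∑ i : Fin r, (r - 1 - (i : ℕ)) * f i) = P r m q := by
  intro r
  induction r with
  | zero => omega
  | succ r ih =>
    intro _ m
    rcases Nat.eq_zero_or_pos r with rfl | hr
    · -- r+1 = 1
      rw [Finset.Nat.antidiagonalTuple_one, Finset.sum_singleton]
      have : ∑ i : Fin 1, (1 - 1 - (i : ℕ)) * (![m] i) = 0 := by simp
      rw [this, pow_zero]
      unfold P
      rw [Finset.prod_congr rfl fun i _ => ?_, Finset.prod_const_one]
      rw [Nat.add_comm, div_self ((by
        have : q ^ (i+1) < 1 := pow_lt_one₀ hq0.le hq1 (by omega)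
        intro h; linarith [sub_eq_zero.mp h] : (1:ℝ) - q ^ (i+1) ≠ 0))]
    · rw [sum_aT_succ]
      rw [← P_conv hq0 hq1 r m]
      refine Finset.sum_congr rfl fun p hp => ?_
      have he : ∀ f : Fin r → ℕ,
          (∑ i : Fin (r+1), (r + 1 - 1 - (i : ℕ)) * (Fin.cons (α := fun _ => ℕ) p.1 f i)) =
            r * p.1 + ∑ i : Fin r, (r - 1 - (i : ℕ)) * f i := by
        intro f
        rw [Fin.sum_univ_succ]
        simp only [Fin.cons_zero, Fin.cons_succ, Fin.val_zero, Fin.val_succ]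
        refine congrArg₂ (· + ·) ?_ ?_
        · congr 1
        · refine Finset.sum_congr rfl fun i _ => ?_
          congr 1
          omega
      simp only [he, pow_add]
      rw [← Finset.mul_sum, ih hr p.2]


/-- The summand indexed by tuples. -/
noncomputable def T (r n : ℕ) (w q x : ℝ) (f : Fin r → ℕ) : ℝ :=
  q ^ (∑ i : Fin r, (r - 1 - (i : ℕ)) * f i) * (-1) ^ (∑ i, f i) * w ^ (∑ i, f i) *
    ((1 - q ^ (((∑ i, f i : ℕ) : ℝ) + x)) / (1 - q)) ^ n

lemma summable_geom_pi (hw0 : 0 ≤ w) (hw1 : w < 1) (r : ℕ) :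
    Summable (fun f : Fin r → ℕ => ∏ i, w ^ f i) := by
  induction r with
  | zero =>
    have : (fun f : Fin 0 → ℕ => ∏ i, w ^ f i) = fun _ => 1 := by
      funext f; simp
    rw [this]
    exact summable_of_finite_support (Set.Finite.subset (Set.finite_univ) (by simp))
  | succ r ih =>
    have hg := (summable_geometric_of_lt_one hw0 hw1).mul_of_nonneg ih
      (fun j => pow_nonneg hw0 j)
      (fun f => Finset.prod_nonneg fun i _ => pow_nonneg hw0 _)
    have := ((Fin.consEquiv fun _ : Fin (r+1) => ℕ).symm.summable_iff
      (f := fun p : ℕ × (Fin r → ℕ) => w ^ p.1 * ∏ i, w ^ p.2 i)).2 hg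
    refine this.congr fun f => ?_
    simp only [Function.comp_apply, Fin.consEquiv, Equiv.coe_fn_symm_mk]
    rw [Fin.prod_univ_succ]
    rfl

lemma bracket_nonneg (hq0 : 0 < q) (hq1 : q < 1) (hx : 0 ≤ x) (m : ℕ) :
    0 ≤ (1 - q ^ (((m : ℕ) : ℝ) + x)) / (1 - q) := by
  have h1 : q ^ (((m : ℕ) : ℝ) + x) ≤ 1 :=
    Real.rpow_le_one hq0.le hq1.le (by positivity)
  have h2 : (0:ℝ) < 1 - q := by linarith
  exact div_nonneg (by linarith) h2.le

lemma bracket_le (hq0 : 0 < q) (hq1 : q < 1) (hx : 0 ≤ x) (m : ℕ) :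
    (1 - q ^ (((m : ℕ) : ℝ) + x)) / (1 - q) ≤ 1 / (1 - q) := by
  have h2 : (0:ℝ) < 1 - q := by linarith
  have hA : 0 ≤ q ^ (((m : ℕ) : ℝ) + x) := Real.rpow_nonneg hq0.le _
  gcongr
  linarith

lemma summable_T (hq0 : 0 < q) (hq1 : q < 1) (hw0 : 0 < w) (hw1 : w < 1) (hx : 0 ≤ x) :
    Summable (T r n w q x) := by
  apply Summable.of_abs
  refine Summable.of_nonneg_of_le (f := fun f : Fin r → ℕ => (1 / (1 - q)) ^ n * ∏ i, w ^ f i)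
    (fun f => abs_nonneg _) (fun f => ?_) ((summable_geom_pi hw0.le hw1 r).mul_left _)
  · 
    unfold T
    have h2 : (0:ℝ) < 1 - q := by linarith
    have hB0 := bracket_nonneg hq0 hq1 hx (∑ i, f i)
    have hB1 := bracket_le hq0 hq1 hx (∑ i, f i)
    rw [abs_mul, abs_mul, abs_mul, abs_pow, abs_pow (-1), abs_neg, abs_one, one_pow, mul_one,
      abs_pow, abs_pow, abs_of_pos hq0, abs_of_pos hw0, abs_of_nonneg hB0]
    calc q ^ (∑ i : Fin r, (r - 1 - (i:ℕ)) * f i) * w ^ (∑ i, f i) *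
          ((1 - q ^ (((∑ i, f i : ℕ):ℝ) + x)) / (1 - q)) ^ n
        ≤ 1 * w ^ (∑ i, f i) * (1 / (1 - q)) ^ n := by
          apply mul_le_mul
          · exact mul_le_mul (pow_le_one₀ hq0.le hq1.le) le_rfl (by positivity) zero_le_one
          · exact pow_le_pow_left₀ hB0 hB1 n
          · positivity
          · positivity
      _ = (1 / (1 - q)) ^ n * ∏ i, w ^ f i := by
          rw [one_mul, Finset.prod_pow_eq_pow_sum]
          ring


lemma fiber_tsum (hq0 : 0 < q) (hq1 : q < 1) (hw0 : 0 < w) (hw1 : w < 1) (hr : 1 ≤ r)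
    (hx : 0 ≤ x) (m : ℕ) :
    ∑' f : (fun f : Fin r → ℕ => ∑ i, f i) ⁻¹' {m}, T r n w q x f
      = qbinomR (m + r - 1) m q * (-1) ^ m * w ^ m *
          ((1 - q ^ ((m : ℝ) + x)) / (1 - q)) ^ n := by
  have hset : ((fun f : Fin r → ℕ => ∑ i, f i) ⁻¹' {m})
      = ↑(Finset.Nat.antidiagonalTuple r m) := by
    ext f
    simp [Finset.Nat.mem_antidiagonalTuple]
  rw [hset, _root_.tsum_subtype, tsum_eq_sum (s := Finset.Nat.antidiagonalTuple r m)
    (fun f hf => Set.indicator_of_notMem (by simpa using hf) _),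
    Finset.sum_congr rfl fun f hf => Set.indicator_of_mem (by simpa using hf) _]
  have : ∀ f ∈ Finset.Nat.antidiagonalTuple r m,
      T r n w q x f = q ^ (∑ i : Fin r, (r - 1 - (i : ℕ)) * f i) *
        ((-1) ^ m * w ^ m * ((1 - q ^ ((m : ℝ) + x)) / (1 - q)) ^ n) := by
    intro f hf
    have hm : ∑ i, f i = m := Finset.Nat.mem_antidiagonalTuple.mp hf
    unfold T
    rw [hm]
    ring
  rw [Finset.sum_congr rfl this, ← Finset.sum_mul, sum_aT_pow hq0 hq1 r hr m,
    ← qbinomR_eq_P r m hr q]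
  ring

lemma hqwEuler_eq_tsum (hq0 : 0 < q) (hq1 : q < 1) (hw0 : 0 < w) (hw1 : w < 1) (hr : 1 ≤ r)
    (hx : 0 ≤ x) :
    hqwEuler r n w q x = 2 ^ r * ∑' f : Fin r → ℕ, T r n w q x f := by
  unfold hqwEuler
  congr 1
  have hs := summable_T (r := r) (n := n) hq0 hq1 hw0 hw1 hx
  have h2 := hs.hasSum.tsum_fiberwise (fun f => ∑ i, f i)
  rw [← h2.tsum_eq]
  exact tsum_congr fun m => (fiber_tsum (n := n) hq0 hq1 hw0 hw1 hr hx m).symm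

variable {d : ℕ}

/-- Splitting each coordinate as `a + d * k`. -/
def dmEquiv (r d : ℕ) (hd0 : 0 < d) : (Fin r → Fin d) × (Fin r → ℕ) ≃ (Fin r → ℕ) where
  toFun p := fun i => (p.1 i : ℕ) + d * p.2 i
  invFun f := (fun i => ⟨f i % d, Nat.mod_lt _ hd0⟩, fun i => f i / d)
  left_inv p := by
    obtain ⟨a, k⟩ := p
    refine Prod.ext ?_ ?_
    · funext i
      exact Fin.ext (by simp [Nat.add_mul_mod_self_left, Nat.mod_eq_of_lt (a i).isLt])
    · funext i
      simp [Nat.add_mul_div_left _ _ hd0, Nat.div_eq_of_lt (a i).isLt]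
  right_inv f := by
    funext i
    exact Nat.mod_add_div (f i) d

lemma rpow_piece (hq0 : 0 < q) (hd0 : 0 < d) (a k : ℕ) :
    ((q : ℝ) ^ d) ^ (((k : ℕ) : ℝ) + (((a : ℕ) : ℝ) + x) / d)
      = q ^ ((((a + d * k : ℕ) : ℕ) : ℝ) + x) := by
  rw [← Real.rpow_natCast q d, ← Real.rpow_mul hq0.le]
  congr 1
  have hdne : (d : ℝ) ≠ 0 := Nat.cast_ne_zero.mpr hd0.ne'
  push_cast
  field_simp
  ring

lemma T_decomp (hq0 : 0 < q) (hq1 : q < 1) (hd : Odd d) (hd0 : 0 < d)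
    (a : Fin r → Fin d) (k : Fin r → ℕ) :
    T r n w q x (fun i => (a i : ℕ) + d * k i)
      = ((1 - q ^ d) / (1 - q)) ^ n *
        (q ^ (∑ i : Fin r, (r - 1 - (i : ℕ)) * (a i : ℕ)) * (-1) ^ (∑ i, (a i : ℕ)) *
          w ^ (∑ i, (a i : ℕ))) *
        T r n (w ^ d) (q ^ d) ((((∑ i, (a i : ℕ) : ℕ) : ℝ) + x) / d) k := by
  have h1q : (0:ℝ) < 1 - q := by linarith
  have h1qd : (0:ℝ) < 1 - q ^ d := one_sub_pow_pos hq0 hq1 d hd0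
  unfold T
  have hs1 : ∑ i : Fin r, (r - 1 - (i : ℕ)) * ((a i : ℕ) + d * k i)
      = (∑ i : Fin r, (r - 1 - (i : ℕ)) * (a i : ℕ)) +
        d * ∑ i : Fin r, (r - 1 - (i : ℕ)) * k i := by
    rw [Finset.mul_sum, ← Finset.sum_add_distrib]
    exact Finset.sum_congr rfl fun i _ => by ring
  have hs2 : ∑ i : Fin r, ((a i : ℕ) + d * k i)
      = (∑ i, (a i : ℕ)) + d * ∑ i, k i := by
    rw [Finset.mul_sum, ← Finset.sum_add_distrib]
  have hB : (1 - q ^ ((((∑ i, (a i : ℕ)) + d * ∑ i, k i : ℕ) : ℝ) + x)) / (1 - q)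
      = ((1 - q ^ d) / (1 - q)) *
        ((1 - ((q : ℝ) ^ d) ^ (((∑ i, k i : ℕ) : ℝ) + (((∑ i, (a i : ℕ) : ℕ) : ℝ) + x) / d)) /
          (1 - q ^ d)) := by
    rw [rpow_piece hq0 hd0]
    rw [div_mul_div_comm]
    rw [mul_comm ((1:ℝ) - q ^ d), mul_div_mul_right _ _ h1qd.ne']
  rw [hs1, hs2, hB, mul_pow]
  rw [pow_add q, pow_mul q, pow_add (-1 : ℝ), pow_mul (-1 : ℝ), hd.neg_one_pow,
    pow_add w, pow_mul w]
  ring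

end HqwAux

open HqwAux in
/-- Distribution relation for the `(r-1, q)`-extension of `w`-Euler polynomials of order `r`. -/
theorem hqwEuler_distribution (q w : ℝ) (hq0 : 0 < q) (hq1 : q < 1) (hw0 : 0 < w) (hw1 : w < 1)
    (r : ℕ) (hr : 1 ≤ r) (x : ℝ) (hx : 0 ≤ x) (n : ℕ) (d : ℕ) (hd : Odd d) (hd0 : 0 < d) :
    hqwEuler r n w q x =
      ((1 - q ^ (d : ℝ)) / (1 - q)) ^ n *
        ∑ a : Fin r → Fin d,
          q ^ (∑ i : Fin r, (r - 1 - (i : ℕ)) * (a i : ℕ)) *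
            (-1) ^ (∑ i, (a i : ℕ)) * w ^ (∑ i, (a i : ℕ)) *
              hqwEuler r n (w ^ d) (q ^ d) (((∑ i, (a i : ℕ) : ℕ) + x) / d) := by
  have hq0d : 0 < q ^ d := pow_pos hq0 d
  have hq1d : q ^ d < 1 := pow_lt_one₀ hq0.le hq1 hd0.ne'
  have hw0d : 0 < w ^ d := pow_pos hw0 d
  have hw1d : w ^ d < 1 := pow_lt_one₀ hw0.le hw1 hd0.ne'
  have hx' : ∀ a : Fin r → Fin d, (0:ℝ) ≤ ((∑ i, (a i : ℕ) : ℕ) + x) / d := fun a =>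
    div_nonneg (add_nonneg (Nat.cast_nonneg _) hx) (Nat.cast_nonneg d)
  rw [hqwEuler_eq_tsum hq0 hq1 hw0 hw1 hr hx]
  have hrwE : ∀ a : Fin r → Fin d,
      hqwEuler r n (w ^ d) (q ^ d) (((∑ i, (a i : ℕ) : ℕ) + x) / d)
        = 2 ^ r * ∑' k : Fin r → ℕ,
            T r n (w ^ d) (q ^ d) (((∑ i, (a i : ℕ) : ℕ) + x) / d) k := fun a =>
    hqwEuler_eq_tsum hq0d hq1d hw0d hw1d hr (hx' a)
  simp only [hrwE]
  have hsum := summable_T (r := r) (n := n) hq0 hq1 hw0 hw1 hx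
  have he := (dmEquiv r d hd0).tsum_eq (T r n w q x)
  have hsum2 : Summable (fun p : (Fin r → Fin d) × (Fin r → ℕ) =>
      T r n w q x ((dmEquiv r d hd0) p)) := (dmEquiv r d hd0).summable_iff.2 hsum
  rw [← he, Summable.tsum_prod hsum2, tsum_fintype]
  have hptw : ∀ a : Fin r → Fin d, ∀ k : Fin r → ℕ,
      T r n w q x ((dmEquiv r d hd0) (a, k))
        = (((1 - q ^ d) / (1 - q)) ^ n *
            (q ^ (∑ i : Fin r, (r - 1 - (i : ℕ)) * (a i : ℕ)) * (-1) ^ (∑ i, (a i : ℕ)) *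
              w ^ (∑ i, (a i : ℕ)))) *
          T r n (w ^ d) (q ^ d) ((((∑ i, (a i : ℕ) : ℕ) : ℝ) + x) / d) k := fun a k =>
    T_decomp hq0 hq1 hd hd0 a k
  rw [Real.rpow_natCast, Finset.mul_sum, Finset.mul_sum]
  refine Finset.sum_congr rfl fun a _ => ?_
  rw [tsum_congr (hptw a), tsum_mul_left]
  ring
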